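/- arXiv:1305.5575 — 4 statements merged into one kernel-verified Lean document; each statement's English description precedes it below -/
import Mathlib

section
/- Let κ, σ > 0, T > 0 and b ≠ 0 be real numbers, and assume that for every u ∈ [0,T] one has 1/b ≠ (σ²/2)·∫₀^u e^{φ(v)} dv. Then the function β(κ,σ,b;u) = B(κ,σ;u) + e^{φ(u)} · (1/b − (σ²/2)∫₀^u e^{φ(v)} dv)^{−1} satisfies β(κ,σ,b;0) = b and, for every u ∈ [0,T], β′(κ,σ,b;u) = −κ·β(κ,σ,b;u) + (σ²/2)·β(κ,σ,b;u)² − 1. -/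
open Real MeasureTheory

/-!
The substitution `β = B + 1 / w` turns a Riccati equation `β' = a β² + c β + d` with a known
solution `B` into the linear equation `w' = -(2 a B + c) w - a`. With the integrating factor
`e^φ`, `φ' = 2 a B + c`, its solutions are `w = e^{-φ} (1/b - a ∫₀ᵘ e^φ)`, which gives the
formula for `β`. It remains to check that the closed form `B` is a solution: for
`ϖ² = κ² + 2σ²` this is a rational identity in `e^{ϖu}`.
-/

theorem hasDerivAt_add_exp_mul_inv_of_riccati {a c d u : ℝ} {B φ g : ℝ → ℝ}
    (hB : HasDerivAt B (a * B u ^ 2 + c * B u + d) u)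
    (hφ : HasDerivAt φ (2 * a * B u + c) u)
    (hg : HasDerivAt g (-(a * exp (φ u))) u) (hg0 : g u ≠ 0) :
    HasDerivAt (fun v ↦ B v + exp (φ v) * (g v)⁻¹)
      (a * (B u + exp (φ u) * (g u)⁻¹) ^ 2 + c * (B u + exp (φ u) * (g u)⁻¹) + d) u := by
  refine (hB.add (hφ.exp.mul (hg.inv hg0))).congr_deriv ?_
  simp only [Pi.inv_apply]
  field_simp
  ring

/-- The paper's `B(κ, σ; ·)`, with `ϖ = √(κ² + 2σ²)` as a separate parameter. -/
noncomputable def riccatiB (κ ϖ u : ℝ) : ℝ :=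
  -(2 * (exp (ϖ * u) - 1)) / (2 * ϖ + (κ + ϖ) * (exp (ϖ * u) - 1))

theorem abs_lt_sqrt_sq_add_two_mul_sq (κ : ℝ) {σ : ℝ} (hσ : σ ≠ 0) :
    |κ| < √(κ ^ 2 + 2 * σ ^ 2) :=
  (Real.lt_sqrt (abs_nonneg κ)).2 (by rw [sq_abs]; exact lt_add_of_pos_right _ (by positivity))

theorem riccatiB_denom_pos {κ ϖ : ℝ} (h : |κ| < ϖ) (u : ℝ) :
    0 < 2 * ϖ + (κ + ϖ) * (exp (ϖ * u) - 1) := by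
  obtain ⟨hlt, hgt⟩ := abs_lt.1 h
  have : 0 < (κ + ϖ) * exp (ϖ * u) := mul_pos (by linarith) (exp_pos _)
  linarith

theorem hasDerivAt_riccatiB {κ σ ϖ u : ℝ} (hϖ : ϖ ^ 2 = κ ^ 2 + 2 * σ ^ 2)
    (hD : 2 * ϖ + (κ + ϖ) * (exp (ϖ * u) - 1) ≠ 0) :
    HasDerivAt (riccatiB κ ϖ)
      (σ ^ 2 / 2 * riccatiB κ ϖ u ^ 2 + -κ * riccatiB κ ϖ u + -1) u := by
  have hE : HasDerivAt (fun v ↦ exp (ϖ * v) - 1) (exp (ϖ * u) * ϖ) u :=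
    (((hasDerivAt_id u).const_mul ϖ).exp.sub_const 1).congr_deriv (by simp)
  refine ((hE.const_mul 2).neg.div ((hE.const_mul (κ + ϖ)).const_add (2 * ϖ)) hD).congr_deriv ?_
  have hσ : σ ^ 2 = (ϖ ^ 2 - κ ^ 2) / 2 := by linarith
  simp only [riccatiB, Pi.neg_apply, hσ]
  field_simp
  ring

theorem riccati_beta_explicit_solution_general (κ σ T b ϖ : ℝ) (B φ β : ℝ → ℝ)
    (hσ : 0 < σ)
    (hϖ : ϖ = Real.sqrt (κ ^ 2 + 2 * σ ^ 2))
    (hB : ∀ u : ℝ, B u =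
      -(2 * (Real.exp (ϖ * u) - 1)) / (2 * ϖ + (κ + ϖ) * (Real.exp (ϖ * u) - 1)))
    (hφ : ∀ u : ℝ, φ u = σ ^ 2 * (∫ v in (0:ℝ)..u, B v) - κ * u)
    (hβ : ∀ u : ℝ, β u = B u +
      Real.exp (φ u) * (1 / b - σ ^ 2 / 2 * ∫ v in (0:ℝ)..u, Real.exp (φ v))⁻¹)
    (hne : ∀ u ∈ Set.Icc (0:ℝ) T,
      1 / b ≠ σ ^ 2 / 2 * ∫ v in (0:ℝ)..u, Real.exp (φ v)) :
    β 0 = b ∧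
    ∀ u ∈ Set.Icc (0:ℝ) T,
      HasDerivAt β (-κ * β u + σ ^ 2 / 2 * (β u) ^ 2 - 1) u := by
  have hBeq : B = riccatiB κ ϖ := funext hB
  have hϖκ : |κ| < ϖ := hϖ ▸ abs_lt_sqrt_sq_add_two_mul_sq κ hσ.ne'
  have hϖsq : ϖ ^ 2 = κ ^ 2 + 2 * σ ^ 2 := by rw [hϖ, sq_sqrt (by positivity)]
  have hB' (u : ℝ) : HasDerivAt B (σ ^ 2 / 2 * B u ^ 2 + -κ * B u + -1) u :=
    hBeq ▸ hasDerivAt_riccatiB hϖsq (riccatiB_denom_pos hϖκ u).ne'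
  have hBc : Continuous B := continuous_iff_continuousAt.2 fun v ↦ (hB' v).continuousAt
  have hφ' (u : ℝ) : HasDerivAt φ (2 * (σ ^ 2 / 2) * B u + -κ) u := by
    rw [funext hφ]
    refine (((hBc.integral_hasStrictDerivAt 0 u).hasDerivAt.const_mul _).sub
      ((hasDerivAt_id u).const_mul κ)).congr_deriv ?_
    ring
  have hφc : Continuous φ := continuous_iff_continuousAt.2 fun v ↦ (hφ' v).continuousAt
  refine ⟨by simp [hβ, hB, hφ], fun u hu ↦ ?_⟩
  rw [funext hβ]
  have hg' : HasDerivAt (fun u ↦ 1 / b - σ ^ 2 / 2 * ∫ v in (0:ℝ)..u, exp (φ v))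
      (-(σ ^ 2 / 2 * exp (φ u))) u :=
    ((hφc.rexp.integral_hasStrictDerivAt 0 u).hasDerivAt.const_mul _).const_sub _
  refine (hasDerivAt_add_exp_mul_inv_of_riccati (hB' u) (hφ' u) hg'
    (sub_ne_zero.2 (hne u hu))).congr_deriv ?_
  ring

/-- For κ, σ > 0, T > 0 and b ≠ 0, with
`B(κ,σ;u) = −2(e^{ϖu} − 1)/(2ϖ + (κ+ϖ)(e^{ϖu} − 1))`, `ϖ = √(κ² + 2σ²)`,
`φ(u) = σ²∫₀ᵘ B(v)dv − κu`, and assuming `1/b ≠ (σ²/2)∫₀ᵘ e^{φ(v)}dv` for every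
`u ∈ [0,T]`, the function
`β(u) = B(u) + e^{φ(u)}·(1/b − (σ²/2)∫₀ᵘ e^{φ(v)}dv)⁻¹`
satisfies `β 0 = b` and solves `β′ = −κβ + (σ²/2)β² − 1` on `[0,T]`. -/
theorem riccati_beta_explicit_solution (κ σ T b ϖ : ℝ) (B φ β : ℝ → ℝ)
    (hκ : 0 < κ) (hσ : 0 < σ) (hT : 0 < T) (hb : b ≠ 0)
    (hϖ : ϖ = Real.sqrt (κ ^ 2 + 2 * σ ^ 2))
    (hB : ∀ u : ℝ, B u =
      -(2 * (Real.exp (ϖ * u) - 1)) / (2 * ϖ + (κ + ϖ) * (Real.exp (ϖ * u) - 1)))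
    (hφ : ∀ u : ℝ, φ u = σ ^ 2 * (∫ v in (0:ℝ)..u, B v) - κ * u)
    (hβ : ∀ u : ℝ, β u = B u +
      Real.exp (φ u) * (1 / b - σ ^ 2 / 2 * ∫ v in (0:ℝ)..u, Real.exp (φ v))⁻¹)
    (hne : ∀ u ∈ Set.Icc (0:ℝ) T,
      1 / b ≠ σ ^ 2 / 2 * ∫ v in (0:ℝ)..u, Real.exp (φ v)) :
    β 0 = b ∧
    ∀ u ∈ Set.Icc (0:ℝ) T,
      HasDerivAt β (-κ * β u + σ ^ 2 / 2 * (β u) ^ 2 - 1) u :=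
  riccati_beta_explicit_solution_general κ σ T b ϖ B φ β hσ hϖ hB hφ hβ hne
end

section
/- For all real numbers κ > 0, σ > 0 and every u ≥ 0, with ϖ = √(κ² + 2σ²) and φ(u) = σ²∫₀^u B(κ,σ;v) dv − κu, one has the closed-form identity e^{φ(u)} = e^{ϖu} · (2ϖ / ((ϖ−κ) + e^{ϖu}(κ+ϖ)))². -/
open Real MeasureTheory

/-!
Writing `D(v) = (ϖ - κ) + e^{ϖv}(κ + ϖ)` for the denominator of `B` (note `D(0) = 2ϖ`), the
relation `ϖ² = κ² + 2σ²` gives the partial fraction decomposition `σ²B = (ϖ + κ) - 2D'/D`.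
Hence `σ²∫₀ᵘ B = (ϖ + κ)u + 2 log (2ϖ / D(u))`, and exponentiating `φ(u)` yields the closed form.
-/

noncomputable def denomB (κ ϖ v : ℝ) : ℝ := (ϖ - κ) + exp (ϖ * v) * (κ + ϖ)

noncomputable def funB (κ ϖ v : ℝ) : ℝ :=
  -(2 * (exp (ϖ * v) - 1)) / (2 * ϖ + (κ + ϖ) * (exp (ϖ * v) - 1))

section

variable {κ σ ϖ : ℝ}

lemma denomB_zero : denomB κ ϖ 0 = 2 * ϖ := by
  simp only [denomB, mul_zero, exp_zero]; ring

lemma denomB_pos (hκ : 0 < κ) (hκϖ : κ ≤ ϖ) (v : ℝ) : 0 < denomB κ ϖ v := by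
  unfold denomB
  have : 0 < exp (ϖ * v) * (κ + ϖ) := mul_pos (exp_pos _) (by linarith)
  linarith

lemma hasDerivAt_denomB (v : ℝ) :
    HasDerivAt (denomB κ ϖ) (exp (ϖ * v) * ϖ * (κ + ϖ)) v := by
  have hexp : HasDerivAt (fun v ↦ exp (ϖ * v)) (exp (ϖ * v) * ϖ) v := by
    simpa using ((hasDerivAt_id v).const_mul ϖ).exp
  exact (hexp.mul_const (κ + ϖ)).const_add (ϖ - κ)

lemma funB_eq_div_denomB (v : ℝ) : funB κ ϖ v = -(2 * (exp (ϖ * v) - 1)) / denomB κ ϖ v := by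
  rw [funB, denomB]; congr 1; ring

lemma continuous_funB (hD : ∀ v, denomB κ ϖ v ≠ 0) : Continuous (funB κ ϖ) := by
  simp_rw [funext (funB_eq_div_denomB (κ := κ) (ϖ := ϖ))]
  exact Continuous.div (by fun_prop) (by unfold denomB; fun_prop) hD

lemma sq_mul_funB_eq (hsq : ϖ ^ 2 = κ ^ 2 + 2 * σ ^ 2) {v : ℝ} (hD : denomB κ ϖ v ≠ 0) :
    σ ^ 2 * funB κ ϖ v = (ϖ + κ) - 2 * (exp (ϖ * v) * ϖ * (κ + ϖ) / denomB κ ϖ v) := by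
  rw [funB_eq_div_denomB]
  field_simp
  unfold denomB
  linear_combination (exp (ϖ * v) - 1) * hsq

lemma hasDerivAt_primitive_funB (hsq : ϖ ^ 2 = κ ^ 2 + 2 * σ ^ 2) {v : ℝ}
    (hD : denomB κ ϖ v ≠ 0) :
    HasDerivAt (fun v ↦ (ϖ + κ) * v - 2 * log (denomB κ ϖ v)) (σ ^ 2 * funB κ ϖ v) v := by
  rw [sq_mul_funB_eq hsq hD]
  have h := ((hasDerivAt_id' v).const_mul (ϖ + κ)).sub
    (((hasDerivAt_denomB v).log hD).const_mul 2)
  rwa [mul_one] at h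

lemma sq_mul_integral_funB (hκ : 0 < κ) (hκϖ : κ ≤ ϖ) (hsq : ϖ ^ 2 = κ ^ 2 + 2 * σ ^ 2)
    (u : ℝ) :
    σ ^ 2 * ∫ v in (0 : ℝ)..u, funB κ ϖ v = (ϖ + κ) * u + 2 * log (2 * ϖ / denomB κ ϖ u) := by
  have hD v : denomB κ ϖ v ≠ 0 := (denomB_pos hκ hκϖ v).ne'
  have hϖ : 0 < ϖ := hκ.trans_le hκϖ
  rw [← intervalIntegral.integral_const_mul,
    intervalIntegral.integral_eq_sub_of_hasDerivAt (fun v _ ↦ hasDerivAt_primitive_funB hsq (hD v))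
      ((continuous_const.mul (continuous_funB hD)).intervalIntegrable 0 u),
    denomB_zero, log_div (by positivity) (hD u)]
  ring

end

theorem exp_phi_closed_form_general (κ σ ϖ : ℝ) (B φ : ℝ → ℝ)
    (hκ : 0 < κ)
    (hϖ : ϖ = Real.sqrt (κ ^ 2 + 2 * σ ^ 2))
    (hB : ∀ u : ℝ, B u =
      -(2 * (Real.exp (ϖ * u) - 1)) / (2 * ϖ + (κ + ϖ) * (Real.exp (ϖ * u) - 1)))
    (hφ : ∀ u : ℝ, φ u = σ ^ 2 * (∫ v in (0:ℝ)..u, B v) - κ * u) :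
    ∀ u : ℝ, 0 ≤ u →
      Real.exp (φ u) = Real.exp (ϖ * u) *
        (2 * ϖ / ((ϖ - κ) + Real.exp (ϖ * u) * (κ + ϖ))) ^ 2 := by
  intro u _
  have hsq : ϖ ^ 2 = κ ^ 2 + 2 * σ ^ 2 := hϖ ▸ sq_sqrt (by positivity)
  have hκϖ : κ ≤ ϖ := hϖ ▸ le_sqrt_of_sq_le (le_add_of_nonneg_right (by positivity))
  have hratio : 0 < 2 * ϖ / denomB κ ϖ u := div_pos (by linarith) (denomB_pos hκ hκϖ u)
  have hB_eq : B = funB κ ϖ := funext hB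
  rw [hφ, hB_eq, sq_mul_integral_funB hκ hκϖ hsq, ← denomB.eq_def,
    show (ϖ + κ) * u + 2 * log (2 * ϖ / denomB κ ϖ u) - κ * u
      = ϖ * u + log ((2 * ϖ / denomB κ ϖ u) ^ 2) by rw [log_pow]; push_cast; ring,
    exp_add, exp_log (pow_pos hratio 2)]

/-- For κ, σ > 0 and u ≥ 0, with `ϖ = √(κ² + 2σ²)`,
`B(κ,σ;v) = −2(e^{ϖv} − 1)/(2ϖ + (κ+ϖ)(e^{ϖv} − 1))` and
`φ(u) = σ²∫₀ᵘ B(v)dv − κu`, one has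
`e^{φ(u)} = e^{ϖu}·(2ϖ/((ϖ−κ) + e^{ϖu}(κ+ϖ)))²`. -/
theorem exp_phi_closed_form (κ σ ϖ : ℝ) (B φ : ℝ → ℝ)
    (hκ : 0 < κ) (hσ : 0 < σ)
    (hϖ : ϖ = Real.sqrt (κ ^ 2 + 2 * σ ^ 2))
    (hB : ∀ u : ℝ, B u =
      -(2 * (Real.exp (ϖ * u) - 1)) / (2 * ϖ + (κ + ϖ) * (Real.exp (ϖ * u) - 1)))
    (hφ : ∀ u : ℝ, φ u = σ ^ 2 * (∫ v in (0:ℝ)..u, B v) - κ * u) :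
    ∀ u : ℝ, 0 ≤ u →
      Real.exp (φ u) = Real.exp (ϖ * u) *
        (2 * ϖ / ((ϖ - κ) + Real.exp (ϖ * u) * (κ + ϖ))) ^ 2 :=
  exp_phi_closed_form_general κ σ ϖ B φ hκ hϖ hB hφ
end

section
/- Let κ, σ > 0, T > 0, a_ℓ > 0 and b ≠ 0 be real numbers, and assume that for every u ∈ [0,T] one has a_ℓ/b ≠ (σ²a_ℓ/2)·∫₀^u e^{φ_{a_ℓ}(v)} dv, where φ_{a_ℓ} is the function φ formed with parameters (κ, σ√a_ℓ). Then the function β̂(u) := a_ℓ · β(κ, σ√a_ℓ, b/a_ℓ; u) satisfies β̂(0) = b and, for every u ∈ [0,T], β̂′(u) = −κ·β̂(u) + (σ²/2)·β̂(u)² − a_ℓ. -/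
open Real MeasureTheory

/-!
`B(κ, σ; ·)` is an explicit solution of the normalized Riccati equation
`y' = -κ y + (σ²/2) y² - 1` with `B(0) = 0`. Any other solution differs from it by a solution `v`
of the Bernoulli equation `v' = (σ² B - κ) v + (σ²/2) v²`, and `1/v` solves a linear equation,
which gives `v = e^φ / (c - (σ²/2)∫₀^u e^φ)` with `φ' = σ² B - κ`; this is the second summand of
`β(κ, σ, b; ·)`, with `c = 1/b`. Finally, if `β` solves the normalized equation with volatility
`σ√a`, then `a β` solves the equation with constant term `a` and volatility `σ`.
-/

namespace Riccati

noncomputable def rate (κ σ : ℝ) : ℝ := √(κ ^ 2 + 2 * σ ^ 2)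

noncomputable def B (κ σ u : ℝ) : ℝ :=
  -(2 * (exp (rate κ σ * u) - 1)) / (2 * rate κ σ + (κ + rate κ σ) * (exp (rate κ σ * u) - 1))

variable {κ : ℝ} (σ : ℝ)

theorem rate_sq : rate κ σ ^ 2 = κ ^ 2 + 2 * σ ^ 2 :=
  sq_sqrt (by positivity)

theorem le_rate (hκ : 0 ≤ κ) : κ ≤ rate κ σ :=
  (le_sqrt hκ (by positivity)).2 (by nlinarith [sq_nonneg σ])

theorem denom_pos (hκ : 0 < κ) (u : ℝ) :
    0 < 2 * rate κ σ + (κ + rate κ σ) * (exp (rate κ σ * u) - 1) := by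
  have := le_rate σ hκ.le
  nlinarith [exp_pos (rate κ σ * u)]

theorem hasDerivAt_B (hκ : 0 < κ) (u : ℝ) :
    HasDerivAt (B κ σ) (-κ * B κ σ u + σ ^ 2 / 2 * B κ σ u ^ 2 - 1) u := by
  have hD := (denom_pos σ hκ u).ne'
  have hσ : σ ^ 2 = (rate κ σ ^ 2 - κ ^ 2) / 2 := by linarith [rate_sq (κ := κ) σ]
  unfold B
  set ϖ := rate κ σ
  have hE : HasDerivAt (fun x => exp (ϖ * x)) (ϖ * exp (ϖ * u)) u := by
    simpa [mul_comm] using ((hasDerivAt_id u).const_mul ϖ).exp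
  have hquot := ((hE.sub_const 1).const_mul 2).neg.div
    (((hE.sub_const 1).const_mul (κ + ϖ)).const_add (2 * ϖ)) hD
  refine hquot.congr_deriv ?_
  rw [hσ]
  simp only [Pi.neg_apply]
  field_simp
  ring

theorem continuous_B (hκ : 0 < κ) : Continuous (B κ σ) :=
  continuous_iff_continuousAt.2 fun u => (hasDerivAt_B σ hκ u).continuousAt

end Riccati

theorem HasDerivAt.riccati_add_exp_mul_inv {B φ I : ℝ → ℝ} {κ q a c u : ℝ}
    (hB : HasDerivAt B (-κ * B u + q * B u ^ 2 - a) u)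
    (hφ : HasDerivAt φ (2 * q * B u - κ) u)
    (hI : HasDerivAt I (Real.exp (φ u)) u)
    (hc : c - q * I u ≠ 0) :
    HasDerivAt (fun x => B x + Real.exp (φ x) * (c - q * I x)⁻¹)
      (-κ * (B u + Real.exp (φ u) * (c - q * I u)⁻¹)
        + q * (B u + Real.exp (φ u) * (c - q * I u)⁻¹) ^ 2 - a) u := by
  refine (hB.add (hφ.exp.mul (((hI.const_mul q).const_sub c).inv hc))).congr_deriv ?_
  simp only [Pi.inv_apply]
  field_simp
  ring

theorem riccati_scaling_lemma_general (κ σ T aℓ b σs ϖs : ℝ) (Bs φs βs βhat : ℝ → ℝ)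
    (hκ : 0 < κ) (haℓ : 0 < aℓ)
    (hσs : σs = σ * Real.sqrt aℓ)
    (hϖs : ϖs = Real.sqrt (κ ^ 2 + 2 * σs ^ 2))
    (hBs : ∀ u : ℝ, Bs u =
      -(2 * (Real.exp (ϖs * u) - 1)) / (2 * ϖs + (κ + ϖs) * (Real.exp (ϖs * u) - 1)))
    (hφs : ∀ u : ℝ, φs u = σs ^ 2 * (∫ v in (0:ℝ)..u, Bs v) - κ * u)
    (hβs : ∀ u : ℝ, βs u = Bs u +
      Real.exp (φs u) *
        (1 / (b / aℓ) - σs ^ 2 / 2 * ∫ v in (0:ℝ)..u, Real.exp (φs v))⁻¹)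
    (hne : ∀ u ∈ Set.Icc (0:ℝ) T,
      aℓ / b ≠ σ ^ 2 * aℓ / 2 * ∫ v in (0:ℝ)..u, Real.exp (φs v))
    (hβhat : ∀ u : ℝ, βhat u = aℓ * βs u) :
    βhat 0 = b ∧
    ∀ u ∈ Set.Icc (0:ℝ) T,
      HasDerivAt βhat (-κ * βhat u + σ ^ 2 / 2 * (βhat u) ^ 2 - aℓ) u := by
  have hσs2 : σs ^ 2 = σ ^ 2 * aℓ := by rw [hσs, mul_pow, sq_sqrt haℓ.le]
  have hB : Bs = Riccati.B κ σs := funext fun u => by rw [hBs, hϖs]; rfl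
  have hφ (u : ℝ) : HasDerivAt φs (2 * (σs ^ 2 / 2) * Bs u - κ) u := by
    rw [funext hφs, hB]
    exact ((((Riccati.continuous_B σs hκ).integral_hasStrictDerivAt 0 u).hasDerivAt.const_mul _).sub
      ((hasDerivAt_id u).const_mul κ)).congr_deriv (by ring)
  have hexpφ : Continuous fun u => exp (φs u) :=
    continuous_exp.comp (continuous_iff_continuousAt.2 fun u => (hφ u).continuousAt)
  have hβs' : ∀ u ∈ Set.Icc (0:ℝ) T,
      HasDerivAt βs (-κ * βs u + σs ^ 2 / 2 * βs u ^ 2 - 1) u := by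
    intro u hu
    have hc : 1 / (b / aℓ) - σs ^ 2 / 2 * ∫ v in (0:ℝ)..u, exp (φs v) ≠ 0 := by
      rw [one_div_div, hσs2]
      exact sub_ne_zero.2 (hne u hu)
    rw [hβs u, funext hβs]
    exact (hB ▸ Riccati.hasDerivAt_B σs hκ u).riccati_add_exp_mul_inv (hφ u)
      (hexpφ.integral_hasStrictDerivAt 0 u).hasDerivAt hc
  refine ⟨?_, fun u hu => ?_⟩
  · simp [hβhat, hβs, hBs, hφs, mul_div_cancel₀ _ haℓ.ne']
  · rw [funext hβhat]
    exact ((hβs' u hu).const_mul aℓ).congr_deriv (by rw [hσs2]; ring)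

/-- Scaling lemma for the Riccati equation. Let κ, σ > 0, T > 0,
`a_ℓ > 0` and `b ≠ 0`. Let `σs = σ√a_ℓ`, `ϖs = √(κ² + 2σs²)`, and let `Bs`, `φs`,
`βs` be the functions `B(κ, σ√a_ℓ; ·)`, `φ` and `β(κ, σ√a_ℓ, b/a_ℓ; ·)` formed with
the parameters `(κ, σ√a_ℓ)`. Assume `a_ℓ/b ≠ (σ²a_ℓ/2)∫₀ᵘ e^{φs(v)}dv` for all
`u ∈ [0,T]`. Then `β̂(u) := a_ℓ·β(κ, σ√a_ℓ, b/a_ℓ; u)` satisfies `β̂(0) = b` and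
`β̂′ = −κβ̂ + (σ²/2)β̂² − a_ℓ` on `[0,T]`. -/
theorem riccati_scaling_lemma (κ σ T aℓ b σs ϖs : ℝ) (Bs φs βs βhat : ℝ → ℝ)
    (hκ : 0 < κ) (hσ : 0 < σ) (hT : 0 < T) (haℓ : 0 < aℓ) (hb : b ≠ 0)
    (hσs : σs = σ * Real.sqrt aℓ)
    (hϖs : ϖs = Real.sqrt (κ ^ 2 + 2 * σs ^ 2))
    (hBs : ∀ u : ℝ, Bs u =
      -(2 * (Real.exp (ϖs * u) - 1)) / (2 * ϖs + (κ + ϖs) * (Real.exp (ϖs * u) - 1)))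
    (hφs : ∀ u : ℝ, φs u = σs ^ 2 * (∫ v in (0:ℝ)..u, Bs v) - κ * u)
    (hβs : ∀ u : ℝ, βs u = Bs u +
      Real.exp (φs u) *
        (1 / (b / aℓ) - σs ^ 2 / 2 * ∫ v in (0:ℝ)..u, Real.exp (φs v))⁻¹)
    (hne : ∀ u ∈ Set.Icc (0:ℝ) T,
      aℓ / b ≠ σ ^ 2 * aℓ / 2 * ∫ v in (0:ℝ)..u, Real.exp (φs v))
    (hβhat : ∀ u : ℝ, βhat u = aℓ * βs u) :
    βhat 0 = b ∧
    ∀ u ∈ Set.Icc (0:ℝ) T,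
      HasDerivAt βhat (-κ * βhat u + σ ^ 2 / 2 * (βhat u) ^ 2 - aℓ) u :=
  riccati_scaling_lemma_general κ σ T aℓ b σs ϖs Bs φs βs βhat hκ haℓ hσs hϖs hBs hφs hβs hne hβhat
end

section
/- Let T > 0, let a_ℓ, b_ℓ, c_ℓ, α_A, α_B, κ_A, κ_B, σ_A, σ_B ∈ ℝ, let c_A, c_B, d_A, d_B ≥ 0, let λ̂_A, λ̂_B, λ̂_c ≥ 0 and set λ = λ̂_A + λ̂_B + λ̂_c. Let F̃_A, F̃_B be probability measures on [0,∞) and F_{AB} a probability measure on [0,∞)², each with finite first moment, and define Φ(θ_A,θ_B) = ∫ e^{θ_A y_A + θ_B y_B} F_{AB}(dy_A,dy_B), Φ̃_A(θ) = ∫ e^{θy} F̃_A(dy), Φ̃_B(θ) = ∫ e^{θy} F̃_B(dy), together with the partial derivatives Φ_1(θ_A,θ_B) = ∫ y_A e^{θ_A y_A + θ_B y_B} F_{AB}(dy), Φ_2(θ_A,θ_B) = ∫ y_B e^{θ_A y_A + θ_B y_B} F_{AB}(dy), Φ̃_A′(θ) = ∫ y e^{θy} F̃_A(dy), Φ̃_B′(θ)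 = ∫ y e^{θy} F̃_B(dy). Suppose β_A, β_B, β_{AB}, θ_A, θ_B, θ_{AB} : [0,T] → ℝ are differentiable, β_A(u) ≤ 0 and β_B(u) ≤ 0 for all u ∈ [0,T], and they satisfy on [0,T]: β_A′ = −κ_A β_A + (σ_A²/2) β_A² − a_ℓ; β_B′ = −κ_B β_B + (σ_B²/2) β_B² − b_ℓ; β_{AB}′(u) = α_A β_A(u) + α_B β_B(u) − λ − c_ℓ + λ̂_c Φ(c_Aβ_A(u), c_Bβ_B(u)) + λ̂_A Φ̃_A(d_Aβ_A(u)) + λ̂_B Φ̃_B(d_Bβ_B(u)); θ_A′ = −κ_A θ_A + σ_A² θ_A β_A; θ_B′ = −κ_B θ_B + σ_B² θ_B β_B; θ_{AB}′(u) = α_A θ_A(u) + α_B θ_B(u) + λ̂_c c_A θ_A(u) Φ_1(c_Aβ_A(u), c_Bβ_B(u)) + λ̂_c c_B θ_B(u) Φ_2(c_Aβ_A(u), c_Bβ_B(u)) + λ̂_A d_A θ_A(u) Φ̃_A′(d_Aβ_A(u)) + λ̂_B d_B θ_B(u) Φ̃_B′(d_Bβ_B(u)). Define f(t, x_A, x_B)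 = ( θ_{AB}(T−t) + θ_A(T−t)x_A + θ_B(T−t)x_B ) · exp( β_{AB}(T−t) + β_A(T−t)x_A + β_B(T−t)x_B ). Then for every t ∈ [0,T] and all x_A, x_B ≥ 0: ∂f/∂t(t,x_A,x_B) + (σ_A² x_A/2)·∂²f/∂x_A²(t,x_A,x_B) + (σ_B² x_B/2)·∂²f/∂x_B²(t,x_A,x_B) + (α_A − κ_A x_A)·∂f/∂x_A(t,x_A,x_B) + (α_B − κ_B x_B)·∂f/∂x_B(t,x_A,x_B) − λ f(t,x_A,x_B) + λ̂_A ∫ f(t, x_A + d_A y, x_B) F̃_A(dy) + λ̂_B ∫ f(t, x_A, x_B + d_B y) F̃_B(dy) + λ̂_c ∫ f(t, x_A + c_A y_A, x_B + c_B y_B) F_{AB}(dy_A, dy_B) = (a_ℓ x_A + b_ℓ x_B + c_ℓ) f(t, x_A, x_B). -/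
/-!
The ansatz is (affine) × exp(affine) in the state, and this shape is preserved by every term
of the generator with the exponent's coefficients unchanged: differentiating in `x_i` gives
`θ_i e^{…} + β_i f`, and a jump `j` gives `e^{β·j} (f + (θ·j) e^{…})`, whose integral against
the jump law is a combination of `Φ, Φ₁, Φ₂, Φ̃, Φ̃′` (finite since `β_A, β_B ≤ 0` and the laws
live on the nonnegative orthant). Everything is then a polynomial in `x_A, x_B` times the same
exponential, and the Riccati equations for `β` and the linear ones for `θ` are exactly the
matching of its coefficients with `ℓ f`.
-/

open MeasureTheory Real Set

noncomputable def affineMulExp (θ₀ θ₁ θ₂ β₀ β₁ β₂ x₁ x₂ : ℝ) : ℝ :=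
  (θ₀ + θ₁ * x₁ + θ₂ * x₂) * exp (β₀ + β₁ * x₁ + β₂ * x₂)

namespace affineMulExp

variable (θ₀ θ₁ θ₂ β₀ β₁ β₂ : ℝ)

theorem hasDerivAt_fst (x₁ x₂ : ℝ) :
    HasDerivAt (fun x => affineMulExp θ₀ θ₁ θ₂ β₀ β₁ β₂ x x₂)
      (affineMulExp (θ₁ + β₁ * θ₀) (β₁ * θ₁) (β₁ * θ₂) β₀ β₁ β₂ x₁ x₂) x₁ := by
  have hlin : ∀ c₀ c₁ c₂ : ℝ, HasDerivAt (fun x => c₀ + c₁ * x + c₂ * x₂) c₁ x₁ := fun c₀ c₁ c₂ =>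
    by simpa using (((hasDerivAt_id x₁).const_mul c₁).const_add c₀).add_const (c₂ * x₂)
  refine ((hlin θ₀ θ₁ θ₂).mul (hlin β₀ β₁ β₂).exp).congr_deriv ?_
  simp only [affineMulExp]
  ring

theorem hasDerivAt_snd (x₁ x₂ : ℝ) :
    HasDerivAt (fun x => affineMulExp θ₀ θ₁ θ₂ β₀ β₁ β₂ x₁ x)
      (affineMulExp (θ₂ + β₂ * θ₀) (β₂ * θ₁) (β₂ * θ₂) β₀ β₁ β₂ x₁ x₂) x₂ := by
  have hlin : ∀ c₀ c₁ c₂ : ℝ, HasDerivAt (fun x => c₀ + c₁ * x₁ + c₂ * x) c₂ x₂ := fun c₀ c₁ c₂ =>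
    by simpa using ((hasDerivAt_id x₂).const_mul c₂).const_add (c₀ + c₁ * x₁)
  refine ((hlin θ₀ θ₁ θ₂).mul (hlin β₀ β₁ β₂).exp).congr_deriv ?_
  simp only [affineMulExp]
  ring

theorem deriv_fst (x₁ x₂ : ℝ) :
    deriv (fun x => affineMulExp θ₀ θ₁ θ₂ β₀ β₁ β₂ x x₂) x₁ =
      affineMulExp (θ₁ + β₁ * θ₀) (β₁ * θ₁) (β₁ * θ₂) β₀ β₁ β₂ x₁ x₂ :=
  (hasDerivAt_fst ..).deriv

theorem deriv_snd (x₁ x₂ : ℝ) :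
    deriv (fun x => affineMulExp θ₀ θ₁ θ₂ β₀ β₁ β₂ x₁ x) x₂ =
      affineMulExp (θ₂ + β₂ * θ₀) (β₂ * θ₁) (β₂ * θ₂) β₀ β₁ β₂ x₁ x₂ :=
  (hasDerivAt_snd ..).deriv

end affineMulExp

theorem HasDerivWithinAt.affineMulExp {θ₀ θ₁ θ₂ β₀ β₁ β₂ : ℝ → ℝ}
    {θ₀' θ₁' θ₂' β₀' β₁' β₂' : ℝ} {s : Set ℝ} {u : ℝ}
    (hθ₀ : HasDerivWithinAt θ₀ θ₀' s u) (hθ₁ : HasDerivWithinAt θ₁ θ₁' s u)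
    (hθ₂ : HasDerivWithinAt θ₂ θ₂' s u) (hβ₀ : HasDerivWithinAt β₀ β₀' s u)
    (hβ₁ : HasDerivWithinAt β₁ β₁' s u) (hβ₂ : HasDerivWithinAt β₂ β₂' s u) (x₁ x₂ : ℝ) :
    HasDerivWithinAt (fun v => _root_.affineMulExp (θ₀ v) (θ₁ v) (θ₂ v) (β₀ v) (β₁ v) (β₂ v) x₁ x₂)
      (_root_.affineMulExp θ₀' θ₁' θ₂' (β₀ u) (β₁ u) (β₂ u) x₁ x₂ +
        (β₀' + β₁' * x₁ + β₂' * x₂) *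
          _root_.affineMulExp (θ₀ u) (θ₁ u) (θ₂ u) (β₀ u) (β₁ u) (β₂ u) x₁ x₂) s u := by
  refine (((hθ₀.add (hθ₁.mul_const x₁)).add (hθ₂.mul_const x₂)).mul
    ((hβ₀.add (hβ₁.mul_const x₁)).add (hβ₂.mul_const x₂)).exp).congr_deriv ?_
  simp only [_root_.affineMulExp, Pi.add_apply]
  ring

theorem derivWithin_comp_const_sub_Icc {g : ℝ → ℝ} {g' T t : ℝ} (hT : 0 < T)
    (ht : t ∈ Icc 0 T) (hg : HasDerivWithinAt g g' (Icc 0 T) (T - t)) :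
    derivWithin (fun s => g (T - s)) (Icc 0 T) t = -g' := by
  have hmaps : MapsTo (fun s => T - s) (Icc 0 T) (Icc 0 T) := fun s hs =>
    ⟨by linarith [hs.2], by linarith [hs.1]⟩
  have hcomp := hg.comp t ((hasDerivWithinAt_id t _).const_sub T) hmaps
  rw [show (fun s => g (T - s)) = g ∘ (T - ·) from rfl,
    hcomp.derivWithin (uniqueDiffOn_Icc hT t ht), mul_neg_one]

section Integrability

variable {α : Type*} [MeasurableSpace α] {μ : Measure α} {φ : α → ℝ}

theorem MeasureTheory.Integrable.mul_exp_of_ae_nonpos {g : α → ℝ} (hg : Integrable g μ)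
    (hφ : AEStronglyMeasurable φ μ) (hφ0 : ∀ᵐ a ∂μ, φ a ≤ 0) :
    Integrable (fun a => g a * exp (φ a)) μ := by
  refine hg.mul_bdd (c := 1) (continuous_exp.comp_aestronglyMeasurable hφ) ?_
  filter_upwards [hφ0] with a ha
  rw [norm_of_nonneg (exp_pos _).le]
  exact exp_le_one_iff.mpr ha

theorem integrable_exp_of_ae_nonpos [IsFiniteMeasure μ] (hφ : AEStronglyMeasurable φ μ)
    (hφ0 : ∀ᵐ a ∂μ, φ a ≤ 0) : Integrable (fun a => exp (φ a)) μ := by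
  simpa using (integrable_const (1 : ℝ)).mul_exp_of_ae_nonpos hφ hφ0

end Integrability

section Jumps

variable {θ₀ θ₁ θ₂ β₀ β₁ β₂ x₁ x₂ : ℝ}

theorem integral_affineMulExp_fst_jump {μ : Measure ℝ} [IsFiniteMeasure μ] {k : ℝ}
    (hμ : ∀ᵐ y ∂μ, 0 ≤ y) (hμ₁ : Integrable (fun y : ℝ => y) μ) (hk : 0 ≤ k) (hβ₁ : β₁ ≤ 0) :
    ∫ y, affineMulExp θ₀ θ₁ θ₂ β₀ β₁ β₂ (x₁ + k * y) x₂ ∂μ =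
      affineMulExp θ₀ θ₁ θ₂ β₀ β₁ β₂ x₁ x₂ * ∫ y, exp (k * β₁ * y) ∂μ +
        θ₁ * k * exp (β₀ + β₁ * x₁ + β₂ * x₂) * ∫ y, y * exp (k * β₁ * y) ∂μ := by
  have hφ : ∀ᵐ y ∂μ, k * β₁ * y ≤ 0 :=
    hμ.mono fun y hy => mul_nonpos_of_nonpos_of_nonneg (mul_nonpos_of_nonneg_of_nonpos hk hβ₁) hy
  have hφm : AEStronglyMeasurable (fun y => k * β₁ * y) μ := by fun_prop
  have hsplit : (fun y => affineMulExp θ₀ θ₁ θ₂ β₀ β₁ β₂ (x₁ + k * y) x₂) = fun y =>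
      affineMulExp θ₀ θ₁ θ₂ β₀ β₁ β₂ x₁ x₂ * exp (k * β₁ * y) +
        θ₁ * k * exp (β₀ + β₁ * x₁ + β₂ * x₂) * (y * exp (k * β₁ * y)) := by
    funext y
    rw [affineMulExp, affineMulExp, show β₀ + β₁ * (x₁ + k * y) + β₂ * x₂ =
      β₀ + β₁ * x₁ + β₂ * x₂ + k * β₁ * y by ring, exp_add]
    ring
  rw [hsplit, integral_add ((integrable_exp_of_ae_nonpos hφm hφ).const_mul _)
    ((hμ₁.mul_exp_of_ae_nonpos hφm hφ).const_mul _), integral_const_mul, integral_const_mul]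

theorem integral_affineMulExp_snd_jump {μ : Measure ℝ} [IsFiniteMeasure μ] {k : ℝ}
    (hμ : ∀ᵐ y ∂μ, 0 ≤ y) (hμ₁ : Integrable (fun y : ℝ => y) μ) (hk : 0 ≤ k) (hβ₂ : β₂ ≤ 0) :
    ∫ y, affineMulExp θ₀ θ₁ θ₂ β₀ β₁ β₂ x₁ (x₂ + k * y) ∂μ =
      affineMulExp θ₀ θ₁ θ₂ β₀ β₁ β₂ x₁ x₂ * ∫ y, exp (k * β₂ * y) ∂μ +
        θ₂ * k * exp (β₀ + β₁ * x₁ + β₂ * x₂) * ∫ y, y * exp (k * β₂ * y) ∂μ := by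
  have hφ : ∀ᵐ y ∂μ, k * β₂ * y ≤ 0 :=
    hμ.mono fun y hy => mul_nonpos_of_nonpos_of_nonneg (mul_nonpos_of_nonneg_of_nonpos hk hβ₂) hy
  have hφm : AEStronglyMeasurable (fun y => k * β₂ * y) μ := by fun_prop
  have hsplit : (fun y => affineMulExp θ₀ θ₁ θ₂ β₀ β₁ β₂ x₁ (x₂ + k * y)) = fun y =>
      affineMulExp θ₀ θ₁ θ₂ β₀ β₁ β₂ x₁ x₂ * exp (k * β₂ * y) +
        θ₂ * k * exp (β₀ + β₁ * x₁ + β₂ * x₂) * (y * exp (k * β₂ * y)) := by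
    funext y
    rw [affineMulExp, affineMulExp, show β₀ + β₁ * x₁ + β₂ * (x₂ + k * y) =
      β₀ + β₁ * x₁ + β₂ * x₂ + k * β₂ * y by ring, exp_add]
    ring
  rw [hsplit, integral_add ((integrable_exp_of_ae_nonpos hφm hφ).const_mul _)
    ((hμ₁.mul_exp_of_ae_nonpos hφm hφ).const_mul _), integral_const_mul, integral_const_mul]

theorem integral_affineMulExp_joint_jump {μ : Measure (ℝ × ℝ)} [IsFiniteMeasure μ] {k₁ k₂ : ℝ}
    (hμ : ∀ᵐ p ∂μ, 0 ≤ p.1 ∧ 0 ≤ p.2) (hμ₁ : Integrable (fun p : ℝ × ℝ => p.1) μ)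
    (hμ₂ : Integrable (fun p : ℝ × ℝ => p.2) μ) (hk₁ : 0 ≤ k₁) (hk₂ : 0 ≤ k₂)
    (hβ₁ : β₁ ≤ 0) (hβ₂ : β₂ ≤ 0) :
    ∫ p, affineMulExp θ₀ θ₁ θ₂ β₀ β₁ β₂ (x₁ + k₁ * p.1) (x₂ + k₂ * p.2) ∂μ =
      affineMulExp θ₀ θ₁ θ₂ β₀ β₁ β₂ x₁ x₂ * ∫ p, exp (k₁ * β₁ * p.1 + k₂ * β₂ * p.2) ∂μ +
        θ₁ * k₁ * exp (β₀ + β₁ * x₁ + β₂ * x₂) *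
          ∫ p, p.1 * exp (k₁ * β₁ * p.1 + k₂ * β₂ * p.2) ∂μ +
        θ₂ * k₂ * exp (β₀ + β₁ * x₁ + β₂ * x₂) *
          ∫ p, p.2 * exp (k₁ * β₁ * p.1 + k₂ * β₂ * p.2) ∂μ := by
  have hφ : ∀ᵐ p ∂μ, k₁ * β₁ * p.1 + k₂ * β₂ * p.2 ≤ 0 := hμ.mono fun p hp =>
    add_nonpos (mul_nonpos_of_nonpos_of_nonneg (mul_nonpos_of_nonneg_of_nonpos hk₁ hβ₁) hp.1)
      (mul_nonpos_of_nonpos_of_nonneg (mul_nonpos_of_nonneg_of_nonpos hk₂ hβ₂) hp.2)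
  have hφm : AEStronglyMeasurable (fun p : ℝ × ℝ => k₁ * β₁ * p.1 + k₂ * β₂ * p.2) μ := by
    fun_prop
  have hsplit : (fun p : ℝ × ℝ =>
      affineMulExp θ₀ θ₁ θ₂ β₀ β₁ β₂ (x₁ + k₁ * p.1) (x₂ + k₂ * p.2)) = fun p =>
      affineMulExp θ₀ θ₁ θ₂ β₀ β₁ β₂ x₁ x₂ * exp (k₁ * β₁ * p.1 + k₂ * β₂ * p.2) +
        θ₁ * k₁ * exp (β₀ + β₁ * x₁ + β₂ * x₂) * (p.1 * exp (k₁ * β₁ * p.1 + k₂ * β₂ * p.2)) +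
        θ₂ * k₂ * exp (β₀ + β₁ * x₁ + β₂ * x₂) * (p.2 * exp (k₁ * β₁ * p.1 + k₂ * β₂ * p.2)) := by
    funext p
    rw [affineMulExp, affineMulExp, show β₀ + β₁ * (x₁ + k₁ * p.1) + β₂ * (x₂ + k₂ * p.2) =
      β₀ + β₁ * x₁ + β₂ * x₂ + (k₁ * β₁ * p.1 + k₂ * β₂ * p.2) by ring, exp_add]
    ring
  have h₀ := (integrable_exp_of_ae_nonpos hφm hφ).const_mul
    (affineMulExp θ₀ θ₁ θ₂ β₀ β₁ β₂ x₁ x₂)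
  have h₁ := (hμ₁.mul_exp_of_ae_nonpos hφm hφ).const_mul
    (θ₁ * k₁ * exp (β₀ + β₁ * x₁ + β₂ * x₂))
  have h₂ := (hμ₂.mul_exp_of_ae_nonpos hφm hφ).const_mul
    (θ₂ * k₂ * exp (β₀ + β₁ * x₁ + β₂ * x₂))
  rw [hsplit, integral_add ?_ h₂, integral_add h₀ h₁, integral_const_mul,
    integral_const_mul, integral_const_mul]
  exact h₀.add h₁

end Jumps

theorem affine_ansatz_solves_PIDE_general
    (T aℓ bℓ cℓ αA αB κA κB σA σB cA cB dA dB lA lB lc lam : ℝ)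
    (hT : 0 < T)
    (hcA : 0 ≤ cA) (hcB : 0 ≤ cB) (hdA : 0 ≤ dA) (hdB : 0 ≤ dB)
    (hlam : lam = lA + lB + lc)
    (FA FB : Measure ℝ) (FAB : Measure (ℝ × ℝ))
    [IsProbabilityMeasure FA] [IsProbabilityMeasure FB] [IsProbabilityMeasure FAB]
    (hFA : FA (Set.Iio (0:ℝ)) = 0) (hFB : FB (Set.Iio (0:ℝ)) = 0)
    (hFAB : FAB {p : ℝ × ℝ | ¬ (0 ≤ p.1 ∧ 0 ≤ p.2)} = 0)
    (hFAmom : Integrable (fun y : ℝ => y) FA)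
    (hFBmom : Integrable (fun y : ℝ => y) FB)
    (hFABmom1 : Integrable (fun p : ℝ × ℝ => p.1) FAB)
    (hFABmom2 : Integrable (fun p : ℝ × ℝ => p.2) FAB)
    (Φ Φ₁ Φ₂ : ℝ → ℝ → ℝ) (ΦA ΦB ΦA' ΦB' : ℝ → ℝ)
    (hΦ : ∀ a b : ℝ, Φ a b = ∫ p : ℝ × ℝ, Real.exp (a * p.1 + b * p.2) ∂FAB)
    (hΦ₁ : ∀ a b : ℝ, Φ₁ a b = ∫ p : ℝ × ℝ, p.1 * Real.exp (a * p.1 + b * p.2) ∂FAB)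
    (hΦ₂ : ∀ a b : ℝ, Φ₂ a b = ∫ p : ℝ × ℝ, p.2 * Real.exp (a * p.1 + b * p.2) ∂FAB)
    (hΦA : ∀ a : ℝ, ΦA a = ∫ y : ℝ, Real.exp (a * y) ∂FA)
    (hΦB : ∀ a : ℝ, ΦB a = ∫ y : ℝ, Real.exp (a * y) ∂FB)
    (hΦA' : ∀ a : ℝ, ΦA' a = ∫ y : ℝ, y * Real.exp (a * y) ∂FA)
    (hΦB' : ∀ a : ℝ, ΦB' a = ∫ y : ℝ, y * Real.exp (a * y) ∂FB)
    (βA βB βAB θA θB θAB : ℝ → ℝ)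
    (hβAneg : ∀ u ∈ Icc (0:ℝ) T, βA u ≤ 0)
    (hβBneg : ∀ u ∈ Icc (0:ℝ) T, βB u ≤ 0)
    (hβA : ∀ u ∈ Icc (0:ℝ) T, HasDerivWithinAt βA
      (-κA * βA u + σA ^ 2 / 2 * (βA u) ^ 2 - aℓ) (Icc (0:ℝ) T) u)
    (hβB : ∀ u ∈ Icc (0:ℝ) T, HasDerivWithinAt βB
      (-κB * βB u + σB ^ 2 / 2 * (βB u) ^ 2 - bℓ) (Icc (0:ℝ) T) u)
    (hβAB : ∀ u ∈ Icc (0:ℝ) T, HasDerivWithinAt βAB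
      (αA * βA u + αB * βB u - lam - cℓ + lc * Φ (cA * βA u) (cB * βB u)
        + lA * ΦA (dA * βA u) + lB * ΦB (dB * βB u)) (Icc (0:ℝ) T) u)
    (hθA : ∀ u ∈ Icc (0:ℝ) T, HasDerivWithinAt θA
      (-κA * θA u + σA ^ 2 * θA u * βA u) (Icc (0:ℝ) T) u)
    (hθB : ∀ u ∈ Icc (0:ℝ) T, HasDerivWithinAt θB
      (-κB * θB u + σB ^ 2 * θB u * βB u) (Icc (0:ℝ) T) u)
    (hθAB : ∀ u ∈ Icc (0:ℝ) T, HasDerivWithinAt θAB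
      (αA * θA u + αB * θB u
        + lc * cA * θA u * Φ₁ (cA * βA u) (cB * βB u)
        + lc * cB * θB u * Φ₂ (cA * βA u) (cB * βB u)
        + lA * dA * θA u * ΦA' (dA * βA u)
        + lB * dB * θB u * ΦB' (dB * βB u)) (Icc (0:ℝ) T) u)
    (f : ℝ → ℝ → ℝ → ℝ)
    (hf : ∀ t xA xB : ℝ, f t xA xB =
      (θAB (T - t) + θA (T - t) * xA + θB (T - t) * xB) *
        Real.exp (βAB (T - t) + βA (T - t) * xA + βB (T - t) * xB)) :
    ∀ t ∈ Icc (0:ℝ) T, ∀ xA xB : ℝ, 0 ≤ xA → 0 ≤ xB →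
      derivWithin (fun t' => f t' xA xB) (Icc (0:ℝ) T) t
        + σA ^ 2 * xA / 2 * deriv (fun x => deriv (fun x' => f t x' xB) x) xA
        + σB ^ 2 * xB / 2 * deriv (fun x => deriv (fun x' => f t xA x') x) xB
        + (αA - κA * xA) * deriv (fun x => f t x xB) xA
        + (αB - κB * xB) * deriv (fun x => f t xA x) xB
        - lam * f t xA xB
        + lA * (∫ y : ℝ, f t (xA + dA * y) xB ∂FA)
        + lB * (∫ y : ℝ, f t xA (xB + dB * y) ∂FB)
        + lc * (∫ p : ℝ × ℝ, f t (xA + cA * p.1) (xB + cB * p.2) ∂FAB)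
      = (aℓ * xA + bℓ * xB + cℓ) * f t xA xB := by
  intro t ht xA xB _ _
  have hu : T - t ∈ Icc 0 T := ⟨by linarith [ht.2], by linarith [ht.1]⟩
  have hFA0 : ∀ᵐ y ∂FA, 0 ≤ y := ae_iff.2 (by simp only [not_le]; exact hFA)
  have hFB0 : ∀ᵐ y ∂FB, 0 ≤ y := ae_iff.2 (by simp only [not_le]; exact hFB)
  have hft : ∀ xA xB, f t xA xB = affineMulExp (θAB (T - t)) (θA (T - t)) (θB (T - t))
      (βAB (T - t)) (βA (T - t)) (βB (T - t)) xA xB := hf t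
  have htime : (fun t' => f t' xA xB) = fun t' => (fun u => affineMulExp (θAB u) (θA u) (θB u)
      (βAB u) (βA u) (βB u) xA xB) (T - t') := funext fun t' => hf t' xA xB
  rw [htime, derivWithin_comp_const_sub_Icc hT ht ((hθAB _ hu).affineMulExp (hθA _ hu) (hθB _ hu)
    (hβAB _ hu) (hβA _ hu) (hβB _ hu) xA xB)]
  simp only [hft, affineMulExp.deriv_fst, affineMulExp.deriv_snd]
  rw [integral_affineMulExp_fst_jump hFA0 hFAmom hdA (hβAneg _ hu),
    integral_affineMulExp_snd_jump hFB0 hFBmom hdB (hβBneg _ hu),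
    integral_affineMulExp_joint_jump (ae_iff.2 hFAB) hFABmom1 hFABmom2 hcA hcB
      (hβAneg _ hu) (hβBneg _ hu)]
  simp only [hlam, hΦ, hΦ₁, hΦ₂, hΦA, hΦB, hΦA', hΦB', affineMulExp]
  ring

/-- Verification that the exponential-affine ansatz
`f(t,x_A,x_B) = (θ_{AB}(T−t) + θ_A(T−t)x_A + θ_B(T−t)x_B)
  · exp(β_{AB}(T−t) + β_A(T−t)x_A + β_B(T−t)x_B)`
solves the PIDE `(∂/∂t + ℒ)f = ℓf` of the two-counterparty jump-CIR model,
provided the coefficient functions solve the associated (generalized) Riccati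
and linear ODE systems on `[0,T]`. -/
theorem affine_ansatz_solves_PIDE
    (T aℓ bℓ cℓ αA αB κA κB σA σB cA cB dA dB lA lB lc lam : ℝ)
    (hT : 0 < T)
    (hcA : 0 ≤ cA) (hcB : 0 ≤ cB) (hdA : 0 ≤ dA) (hdB : 0 ≤ dB)
    (hlA : 0 ≤ lA) (hlB : 0 ≤ lB) (hlc : 0 ≤ lc)
    (hlam : lam = lA + lB + lc)
    (FA FB : Measure ℝ) (FAB : Measure (ℝ × ℝ))
    [IsProbabilityMeasure FA] [IsProbabilityMeasure FB] [IsProbabilityMeasure FAB]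
    (hFA : FA (Set.Iio (0:ℝ)) = 0) (hFB : FB (Set.Iio (0:ℝ)) = 0)
    (hFAB : FAB {p : ℝ × ℝ | ¬ (0 ≤ p.1 ∧ 0 ≤ p.2)} = 0)
    (hFAmom : Integrable (fun y : ℝ => y) FA)
    (hFBmom : Integrable (fun y : ℝ => y) FB)
    (hFABmom1 : Integrable (fun p : ℝ × ℝ => p.1) FAB)
    (hFABmom2 : Integrable (fun p : ℝ × ℝ => p.2) FAB)
    (Φ Φ₁ Φ₂ : ℝ → ℝ → ℝ) (ΦA ΦB ΦA' ΦB' : ℝ → ℝ)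
    (hΦ : ∀ a b : ℝ, Φ a b = ∫ p : ℝ × ℝ, Real.exp (a * p.1 + b * p.2) ∂FAB)
    (hΦ₁ : ∀ a b : ℝ, Φ₁ a b = ∫ p : ℝ × ℝ, p.1 * Real.exp (a * p.1 + b * p.2) ∂FAB)
    (hΦ₂ : ∀ a b : ℝ, Φ₂ a b = ∫ p : ℝ × ℝ, p.2 * Real.exp (a * p.1 + b * p.2) ∂FAB)
    (hΦA : ∀ a : ℝ, ΦA a = ∫ y : ℝ, Real.exp (a * y) ∂FA)
    (hΦB : ∀ a : ℝ, ΦB a = ∫ y : ℝ, Real.exp (a * y) ∂FB)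
    (hΦA' : ∀ a : ℝ, ΦA' a = ∫ y : ℝ, y * Real.exp (a * y) ∂FA)
    (hΦB' : ∀ a : ℝ, ΦB' a = ∫ y : ℝ, y * Real.exp (a * y) ∂FB)
    (βA βB βAB θA θB θAB : ℝ → ℝ)
    (hβAneg : ∀ u ∈ Icc (0:ℝ) T, βA u ≤ 0)
    (hβBneg : ∀ u ∈ Icc (0:ℝ) T, βB u ≤ 0)
    (hβA : ∀ u ∈ Icc (0:ℝ) T, HasDerivWithinAt βA
      (-κA * βA u + σA ^ 2 / 2 * (βA u) ^ 2 - aℓ) (Icc (0:ℝ) T) u)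
    (hβB : ∀ u ∈ Icc (0:ℝ) T, HasDerivWithinAt βB
      (-κB * βB u + σB ^ 2 / 2 * (βB u) ^ 2 - bℓ) (Icc (0:ℝ) T) u)
    (hβAB : ∀ u ∈ Icc (0:ℝ) T, HasDerivWithinAt βAB
      (αA * βA u + αB * βB u - lam - cℓ + lc * Φ (cA * βA u) (cB * βB u)
        + lA * ΦA (dA * βA u) + lB * ΦB (dB * βB u)) (Icc (0:ℝ) T) u)
    (hθA : ∀ u ∈ Icc (0:ℝ) T, HasDerivWithinAt θA
      (-κA * θA u + σA ^ 2 * θA u * βA u) (Icc (0:ℝ) T) u)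
    (hθB : ∀ u ∈ Icc (0:ℝ) T, HasDerivWithinAt θB
      (-κB * θB u + σB ^ 2 * θB u * βB u) (Icc (0:ℝ) T) u)
    (hθAB : ∀ u ∈ Icc (0:ℝ) T, HasDerivWithinAt θAB
      (αA * θA u + αB * θB u
        + lc * cA * θA u * Φ₁ (cA * βA u) (cB * βB u)
        + lc * cB * θB u * Φ₂ (cA * βA u) (cB * βB u)
        + lA * dA * θA u * ΦA' (dA * βA u)
        + lB * dB * θB u * ΦB' (dB * βB u)) (Icc (0:ℝ) T) u)
    (f : ℝ → ℝ → ℝ → ℝ)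
    (hf : ∀ t xA xB : ℝ, f t xA xB =
      (θAB (T - t) + θA (T - t) * xA + θB (T - t) * xB) *
        Real.exp (βAB (T - t) + βA (T - t) * xA + βB (T - t) * xB)) :
    ∀ t ∈ Icc (0:ℝ) T, ∀ xA xB : ℝ, 0 ≤ xA → 0 ≤ xB →
      derivWithin (fun t' => f t' xA xB) (Icc (0:ℝ) T) t
        + σA ^ 2 * xA / 2 * deriv (fun x => deriv (fun x' => f t x' xB) x) xA
        + σB ^ 2 * xB / 2 * deriv (fun x => deriv (fun x' => f t xA x') x) xB
        + (αA - κA * xA) * deriv (fun x => f t x xB) xA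
        + (αB - κB * xB) * deriv (fun x => f t xA x) xB
        - lam * f t xA xB
        + lA * (∫ y : ℝ, f t (xA + dA * y) xB ∂FA)
        + lB * (∫ y : ℝ, f t xA (xB + dB * y) ∂FB)
        + lc * (∫ p : ℝ × ℝ, f t (xA + cA * p.1) (xB + cB * p.2) ∂FAB)
      = (aℓ * xA + bℓ * xB + cℓ) * f t xA xB :=
  affine_ansatz_solves_PIDE_general T aℓ bℓ cℓ αA αB κA κB σA σB cA cB dA dB lA lB lc lam hT hcA hcB
    hdA hdB hlam FA FB FAB hFA hFB hFAB hFAmom hFBmom hFABmom1 hFABmom2 Φ Φ₁ Φ₂ ΦA ΦB ΦA' ΦB' hΦ hΦ₁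
    hΦ₂ hΦA hΦB hΦA' hΦB' βA βB βAB θA θB θAB hβAneg hβBneg hβA hβB hβAB hθA hθB hθAB f hf
end
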